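/- Let g = d₄ with brackets [e₀,e₁] = e₁, [e₀,e₂] = -e₂, [e₁,e₂] = e₃. The almost complex structure j on g determined by j(e₀) = e₁, j(e₁) = -e₀, j(e₃) = e₂, j(e₂) = -e₃ satisfies j² = -id and N_j ≡ 0; hence d₄ admits a complex structure. -/

import Mathlib

/-!
The Nijenhuis tensor `N_j` is bilinear and skew-symmetric, and when `j² = -1` it is
`j`-antilinear in each argument: `N_j(jx, y) = -j N_j(x, y)`. Hence it vanishes as soon as it
vanishes on a complex basis. For `d₄` the vectors `e₀, e₃` form one (`e₁ = j e₀`, `e₂ = j e₃`),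
and `N_j(e₀, e₃) = j [e₀, e₂] - [e₁, e₂] = e₃ - e₃ = 0`.
-/

namespace LieAlgebra

variable {R L : Type*} [CommRing R] [LieRing L] [LieAlgebra R L]

def nijenhuis (j : L →ₗ[R] L) : L →ₗ[R] L →ₗ[R] L :=
  let bracket : L →ₗ[R] L →ₗ[R] L := (LieModule.toEnd R L L : L →ₗ[R] Module.End R L)
  bracket + (bracket ∘ₗ j).compr₂ j + (bracket.compl₂ j).compr₂ j - (bracket ∘ₗ j).compl₂ j

variable (j : L →ₗ[R] L)

@[simp]
theorem nijenhuis_apply (x y : L) :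
    nijenhuis j x y = ⁅x, y⁆ + j ⁅j x, y⁆ + j ⁅x, j y⁆ - ⁅j x, j y⁆ := by
  simp [nijenhuis]

theorem nijenhuis_swap (x y : L) : nijenhuis j y x = -nijenhuis j x y := by
  rw [nijenhuis_apply, nijenhuis_apply, ← lie_skew x y, ← lie_skew (j x) y, ← lie_skew x (j y),
    ← lie_skew (j x) (j y)]
  simp only [map_neg]
  abel

theorem nijenhuis_self (x : L) : nijenhuis j x x = 0 := by
  rw [nijenhuis_apply, lie_self, lie_self, ← lie_skew x (j x), map_neg]
  abel

variable {j}

theorem nijenhuis_apply_left (hj : ∀ x, j (j x) = -x) (x y : L) :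
    nijenhuis j (j x) y = -j (nijenhuis j x y) := by
  simp only [nijenhuis_apply, hj, map_add, map_sub, neg_lie, map_neg]
  abel

theorem nijenhuis_apply_right (hj : ∀ x, j (j x) = -x) (x y : L) :
    nijenhuis j x (j y) = -j (nijenhuis j x y) := by
  rw [nijenhuis_swap, nijenhuis_apply_left hj, nijenhuis_swap, map_neg, neg_neg]

theorem nijenhuis_eq_zero_of_span_union_image (hj : ∀ x, j (j x) = -x) {s : Set L}
    (hs : Submodule.span R (s ∪ j '' s) = ⊤) (hN : ∀ x ∈ s, ∀ y ∈ s, nijenhuis j x y = 0) :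
    nijenhuis j = 0 := by
  have hN' : ∀ x ∈ s ∪ j '' s, ∀ y ∈ s ∪ j '' s, nijenhuis j x y = 0 := by
    rintro _ (hx | ⟨x, hx, rfl⟩) _ (hy | ⟨y, hy, rfl⟩)
    · exact hN _ hx _ hy
    · rw [nijenhuis_apply_right hj, hN _ hx _ hy, map_zero, neg_zero]
    · rw [nijenhuis_apply_left hj, hN _ hx _ hy, map_zero, neg_zero]
    · rw [nijenhuis_apply_left hj, nijenhuis_apply_right hj, hN _ hx _ hy]
      simp
  exact LinearMap.ext_on hs fun x hx => LinearMap.ext_on hs fun y hy => hN' x hx y hy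

end LieAlgebra

open LieAlgebra

theorem d4_admits_complex_structure_general
    (L : Type*) [LieRing L] [LieAlgebra ℝ L]
    (b : Module.Basis (Fin 4) ℝ L)
    (h02 : ⁅b 0, b 2⁆ = -b 2)
    (h12 : ⁅b 1, b 2⁆ = b 3)
    (hz : ∀ i j : Fin 4, i < j →
      (i, j) ≠ ((0 : Fin 4), (1 : Fin 4)) →
      (i, j) ≠ ((0 : Fin 4), (2 : Fin 4)) →
      (i, j) ≠ ((1 : Fin 4), (2 : Fin 4)) → ⁅b i, b j⁆ = 0)
    (j : L →ₗ[ℝ] L)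
    (hj0 : j (b 0) = b 1) (hj1 : j (b 1) = -b 0)
    (hj3 : j (b 3) = b 2) (hj2 : j (b 2) = -b 3) :
    (∀ x : L, j (j x) = -x) ∧
    (∀ x y : L, ⁅x, y⁆ + j ⁅j x, y⁆ + j ⁅x, j y⁆ - ⁅j x, j y⁆ = 0) := by
  have hjj : ∀ x, j (j x) = -x := by
    have : j ∘ₗ j = -LinearMap.id := b.ext fun i => by fin_cases i <;> simp [hj0, hj1, hj2, hj3]
    exact fun x => LinearMap.congr_fun this x
  have hspan : Submodule.span ℝ ({b 0, b 3} ∪ j '' {b 0, b 3}) = ⊤ := by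
    refine top_unique (b.span_eq ▸ Submodule.span_mono ?_)
    rintro _ ⟨i, rfl⟩
    fin_cases i <;> simp [Set.image_pair, hj0, hj3]
  have h03 : ⁅b 0, b 3⁆ = 0 := hz 0 3 (by decide) (by decide) (by decide) (by decide)
  have h13 : ⁅b 1, b 3⁆ = 0 := hz 1 3 (by decide) (by decide) (by decide) (by decide)
  have hN03 : nijenhuis j (b 0) (b 3) = 0 := by
    simp [hj0, hj3, hj2, h02, h12, h03, h13]
  have hN : nijenhuis j = 0 := by
    refine nijenhuis_eq_zero_of_span_union_image hjj hspan ?_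
    simp only [Set.mem_insert_iff, Set.mem_singleton_iff]
    rintro _ (rfl | rfl) _ (rfl | rfl)
    · exact nijenhuis_self j _
    · exact hN03
    · rw [nijenhuis_swap, hN03, neg_zero]
    · exact nijenhuis_self j _
  exact ⟨hjj, fun x y => by simpa using LinearMap.congr_fun₂ hN x y⟩

/-- On `d₄` (`[e₀,e₁]=e₁`, `[e₀,e₂]=-e₂`, `[e₁,e₂]=e₃`), the almost complex
structure `j(e₀)=e₁, j(e₁)=-e₀, j(e₃)=e₂, j(e₂)=-e₃` satisfies `j² = -id` and
`N_j ≡ 0`; hence `d₄` admits a complex structure. -/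
theorem d4_admits_complex_structure
    (L : Type*) [LieRing L] [LieAlgebra ℝ L] [FiniteDimensional ℝ L]
    (b : Module.Basis (Fin 4) ℝ L)
    (h01 : ⁅b 0, b 1⁆ = b 1) (h02 : ⁅b 0, b 2⁆ = -b 2)
    (h12 : ⁅b 1, b 2⁆ = b 3)
    (hz : ∀ i j : Fin 4, i < j →
      (i, j) ≠ ((0 : Fin 4), (1 : Fin 4)) →
      (i, j) ≠ ((0 : Fin 4), (2 : Fin 4)) →
      (i, j) ≠ ((1 : Fin 4), (2 : Fin 4)) → ⁅b i, b j⁆ = 0)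
    (j : L →ₗ[ℝ] L)
    (hj0 : j (b 0) = b 1) (hj1 : j (b 1) = -b 0)
    (hj3 : j (b 3) = b 2) (hj2 : j (b 2) = -b 3) :
    (∀ x : L, j (j x) = -x) ∧
    (∀ x y : L, ⁅x, y⁆ + j ⁅j x, y⁆ + j ⁅x, j y⁆ - ⁅j x, j y⁆ = 0) :=
  d4_admits_complex_structure_general L b h02 h12 hz j hj0 hj1 hj3 hj2
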